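/- Let A be a residuated lattice with reticulation (L, λ). Then A is strongly co-Stone if and only if L is strongly co-Stone. -/
import Mathlib


/-- A (commutative, integral) residuated lattice: a bounded lattice whose top is the
monoid unit `1`, with a commutative monoid operation `*` (⊙) and residuum `himp`
satisfying the law of residuation. -/
class ResiduatedLattice (α : Type*) extends Lattice α, CommMonoid α, OrderBot α where
  himp : α → α → α
  le_one : ∀ a : α, a ≤ 1
  le_himp_iff : ∀ a b c : α, a ≤ himp b c ↔ a * b ≤ c

namespace ResiduatedLattice

variable {α : Type*} [ResiduatedLattice α]

/-- A filter of a residuated lattice: nonempty, closed under ⊙, upward closed. -/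
def IsRLFilter (F : Set α) : Prop :=
  F.Nonempty ∧ (∀ a ∈ F, ∀ b ∈ F, a * b ∈ F) ∧ ∀ a ∈ F, ∀ b : α, a ≤ b → b ∈ F

/-- The principal filter generated by `a`: the smallest filter containing `a`. -/
def princ (a : α) : Set α := ⋂₀ {F : Set α | IsRLFilter F ∧ a ∈ F}

/-- The co-annihilator of a set. -/
def coann (X : Set α) : Set α := {a : α | ∀ x ∈ X, a ⊔ x = 1}

/-- An element is complemented (belongs to the Boolean center). -/
def IsCompl' (a : α) : Prop := ∃ b : α, a ⊔ b = 1 ∧ a ⊓ b = ⊥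

end ResiduatedLattice

open ResiduatedLattice

namespace ResiduatedLattice

variable {α : Type*} [ResiduatedLattice α]

lemma rl_mul_le_mul_left {b c : α} (h : b ≤ c) (a : α) : a * b ≤ a * c := by
  have hc : c ≤ himp a (a * c) := (le_himp_iff c a (a * c)).2 (by rw [mul_comm])
  have hb : b * a ≤ a * c := (le_himp_iff b a (a * c)).1 (h.trans hc)
  rwa [mul_comm b a] at hb

lemma rl_mul_le_mul_right {b c : α} (h : b ≤ c) (a : α) : b * a ≤ c * a := by
  rw [mul_comm b a, mul_comm c a]; exact rl_mul_le_mul_left h a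

lemma rl_mul_le_left (a b : α) : a * b ≤ a := by
  have := rl_mul_le_mul_left (le_one b) a
  rwa [mul_one] at this

lemma rl_mul_sup (a b c : α) : a * (b ⊔ c) = a * b ⊔ a * c := by
  apply le_antisymm
  · have hb : b ≤ himp a (a * b ⊔ a * c) :=
      (le_himp_iff b a _).2 (by rw [mul_comm]; exact le_sup_left)
    have hc : c ≤ himp a (a * b ⊔ a * c) :=
      (le_himp_iff c a _).2 (by rw [mul_comm]; exact le_sup_right)
    have := (le_himp_iff (b ⊔ c) a _).1 (sup_le hb hc)
    rwa [mul_comm (b ⊔ c) a] at this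
  · exact sup_le (rl_mul_le_mul_left le_sup_left a) (rl_mul_le_mul_left le_sup_right a)

lemma rl_sup_one (a : α) : a ⊔ (1 : α) = 1 := le_antisymm (le_one _) le_sup_right

lemma rl_sup_mul_eq_one {a b c : α} (hb : a ⊔ b = 1) (hc : a ⊔ c = 1) :
    a ⊔ b * c = 1 := by
  apply le_antisymm (le_one _)
  have h1 : (1 : α) = (a ⊔ b) * (a ⊔ c) := by rw [hb, hc, mul_one]
  have h2 : (a ⊔ b) * (a ⊔ c) ≤ a ⊔ b * c := by
    rw [rl_mul_sup, mul_comm (a ⊔ b) a, rl_mul_sup, mul_comm (a ⊔ b) c, rl_mul_sup]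
    apply sup_le
    · exact sup_le (le_sup_of_le_left (rl_mul_le_left a a))
        (le_sup_of_le_left ((rl_mul_le_left a b)))
    · apply sup_le
      · exact le_sup_of_le_left (by rw [mul_comm]; exact rl_mul_le_left a c)
      · rw [mul_comm c b]; exact le_sup_right
  calc (1 : α) = (a ⊔ b) * (a ⊔ c) := h1
    _ ≤ a ⊔ b * c := h2

lemma rl_sup_pow {a b : α} (h : a ⊔ b = 1) (n : ℕ) : a ⊔ b ^ n = 1 := by
  induction n with
  | zero => rw [pow_zero]; exact rl_sup_one a
  | succ k ih => rw [pow_succ]; exact rl_sup_mul_eq_one ih h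

lemma rl_pow_sup_pow {a b : α} (h : a ⊔ b = 1) (n : ℕ) : a ^ n ⊔ b ^ n = 1 := by
  have h1 : b ⊔ a = 1 := by rwa [sup_comm]
  have h2 : b ⊔ a ^ n = 1 := rl_sup_pow h1 n
  have h3 : a ^ n ⊔ b = 1 := by rwa [sup_comm]
  have h4 := rl_sup_pow h3 n
  exact h4

lemma rl_mul_eq_bot_of_compl {e b : α} (h2 : e ⊓ b = ⊥) : e * b = ⊥ := by
  apply le_antisymm _ bot_le
  rw [← h2]
  exact le_inf (rl_mul_le_left e b) (by rw [mul_comm]; exact rl_mul_le_left b e)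

lemma rl_idem_of_compl {e b : α} (h1 : e ⊔ b = 1) (h2 : e ⊓ b = ⊥) : e * e = e := by
  have hb : e * b = ⊥ := rl_mul_eq_bot_of_compl h2
  have : e * (e ⊔ b) = e := by rw [h1, mul_one]
  rw [rl_mul_sup, hb, sup_bot_eq] at this
  exact this

lemma rl_pow_of_idem {e : α} (h : e * e = e) (m : ℕ) : e ^ (m + 1) = e := by
  induction m with
  | zero => rw [pow_one]
  | succ k ih => rw [pow_succ, ih, h]

lemma rl_filter_Ici {e : α} (h : e * e = e) : IsRLFilter (Set.Ici e) := by
  refine ⟨⟨e, le_refl e⟩, ?_, ?_⟩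
  · intro a ha b hb
    have : e * e ≤ a * b := (rl_mul_le_mul_left hb e).trans (rl_mul_le_mul_right ha b)
    rwa [h] at this
  · intro a ha b hab
    exact le_trans ha hab

lemma rl_princ_eq_Ici {e : α} (h : e * e = e) : princ e = Set.Ici e := by
  apply subset_antisymm
  · exact Set.sInter_subset_of_mem ⟨rl_filter_Ici h, le_refl e⟩
  · intro b hb
    rw [princ, Set.mem_sInter]
    rintro F ⟨hF, heF⟩
    exact hF.2.2 e heF b hb

end ResiduatedLattice

section Reticulation

variable {α : Type*} [ResiduatedLattice α] {L : Type*} [DistribLattice L] [BoundedOrder L]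

/-- Co-annihilator in a bounded (distributive) lattice. -/
def coannL (Y : Set L) : Set L := {x : L | ∀ y ∈ Y, x ⊔ y = ⊤}

/-- Complemented element of the bounded lattice `L`. -/
def IsComplL (f : L) : Prop := ∃ g : L, f ⊔ g = ⊤ ∧ f ⊓ g = ⊥

theorem reticulation_strongly_coStone_iff (l : α → L)
    (hsurj : Function.Surjective l)
    (hmul : ∀ a b : α, l (a * b) = l a ⊓ l b)
    (hsup : ∀ a b : α, l (a ⊔ b) = l a ⊔ l b)
    (hbot : l ⊥ = ⊥) (hone : l 1 = ⊤)
    (hord : ∀ a b : α, l a ≤ l b ↔ ∃ n : ℕ, 0 < n ∧ a ^ n ≤ b) :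
    (∀ X : Set α, ∃ e : α, IsCompl' e ∧ coann X = princ e) ↔
    (∀ Y : Set L, ∃ f : L, IsComplL f ∧ coannL Y = Set.Ici f) := by
  have lmono : ∀ a b : α, a ≤ b → l a ≤ l b := fun a b h =>
    (hord a b).2 ⟨1, one_pos, by simpa using h⟩
  have leq1 : ∀ a : α, l a = ⊤ → a = 1 := by
    intro a ha
    have h1 : l 1 ≤ l a := by rw [hone, ha]
    obtain ⟨n, hn, hle⟩ := (hord 1 a).1 h1
    exact le_antisymm (ResiduatedLattice.le_one a) (by simpa using hle)
  have lsup1 : ∀ a x : α, (a ⊔ x = 1 ↔ l a ⊔ l x = ⊤) := by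
    intro a x
    constructor
    · intro h; rw [← hsup, h, hone]
    · intro h; exact leq1 _ (by rw [hsup, h])
  have lle : ∀ e a : α, e * e = e → l e ≤ l a → e ≤ a := by
    intro e a he h
    obtain ⟨n, hn, hle⟩ := (hord e a).1 h
    obtain ⟨m, rfl⟩ := Nat.exists_eq_succ_of_ne_zero hn.ne'
    rwa [rl_pow_of_idem he m] at hle
  have lpow : ∀ (e : α) (m : ℕ), l (e ^ (m + 1)) = l e := by
    intro e m
    induction m with
    | zero => rw [pow_one]
    | succ k ih => rw [pow_succ, hmul, ih, inf_idem]
  constructor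
  · -- A strongly co-Stone → L strongly co-Stone
    intro hA Y
    obtain ⟨e, ⟨b, heb1, heb2⟩, hX⟩ := hA (l ⁻¹' Y)
    have hee : e * e = e := rl_idem_of_compl heb1 heb2
    have hprinc : princ e = Set.Ici e := rl_princ_eq_Ici hee
    refine ⟨l e, ⟨l b, ?_, ?_⟩, ?_⟩
    · rw [← hsup, heb1, hone]
    · rw [← hmul, rl_mul_eq_bot_of_compl heb2, hbot]
    · ext x
      obtain ⟨a, rfl⟩ := hsurj x
      simp only [coannL, Set.mem_setOf_eq, Set.mem_Ici]
      constructor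
      · intro hx
        have ha : a ∈ coann (l ⁻¹' Y) := by
          intro u hu
          exact (lsup1 a u).2 (hx (l u) hu)
        rw [hX, hprinc] at ha
        exact lmono _ _ ha
      · intro hx y hy
        have hea : e ≤ a := lle e a hee hx
        have ha : a ∈ coann (l ⁻¹' Y) := by
          rw [hX, hprinc]; exact hea
        obtain ⟨u, rfl⟩ := hsurj y
        exact (lsup1 a u).1 (ha u hy)
  · -- L strongly co-Stone → A strongly co-Stone
    intro hL X
    obtain ⟨f, ⟨g, hfg1, hfg2⟩, hY⟩ := hL (l '' X)
    obtain ⟨e, rfl⟩ := hsurj f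
    obtain ⟨b, rfl⟩ := hsurj g
    have heb1 : e ⊔ b = 1 := (lsup1 e b).2 hfg1
    have hlb : l (e * b) ≤ l ⊥ := by rw [hmul, hfg2, hbot]
    obtain ⟨n, hn, hle⟩ := (hord (e * b) ⊥).1 hlb
    have hprod : (e * b) ^ n = ⊥ := le_antisymm hle bot_le
    set e' := e ^ n with he'
    set b' := b ^ n with hb'
    have h1 : e' ⊔ b' = 1 := rl_pow_sup_pow heb1 n
    have hmulbot : e' * b' = ⊥ := by rw [he', hb', ← mul_pow, hprod]
    have h2 : e' ⊓ b' = ⊥ := by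
      apply le_antisymm _ bot_le
      have c1 : (e' ⊓ b') * e' ≤ ⊥ := by
        calc (e' ⊓ b') * e' ≤ b' * e' := rl_mul_le_mul_right inf_le_right e'
          _ = ⊥ := by rw [mul_comm, hmulbot]
      have c2 : (e' ⊓ b') * b' ≤ ⊥ :=
        le_trans (rl_mul_le_mul_right inf_le_left b') (le_of_eq hmulbot)
      calc e' ⊓ b' = (e' ⊓ b') * (e' ⊔ b') := by rw [h1, mul_one]
        _ = (e' ⊓ b') * e' ⊔ (e' ⊓ b') * b' := rl_mul_sup _ _ _
        _ ≤ ⊥ := sup_le c1 c2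
    have hee : e' * e' = e' := rl_idem_of_compl h1 h2
    have hle' : l e' = l e := by
      obtain ⟨m, rfl⟩ := Nat.exists_eq_succ_of_ne_zero hn.ne'
      exact lpow e m
    refine ⟨e', ⟨b', h1, h2⟩, ?_⟩
    rw [rl_princ_eq_Ici hee]
    ext a
    simp only [coann, Set.mem_setOf_eq, Set.mem_Ici]
    constructor
    · intro ha
      apply lle e' a hee
      rw [hle']
      have hmem : l a ∈ coannL (l '' X) := by
        rintro y ⟨u, hu, rfl⟩
        exact (lsup1 a u).1 (ha u hu)
      rw [hY] at hmem
      exact hmem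
    · intro ha u hu
      have h3 : l e ≤ l a := by rw [← hle']; exact lmono _ _ ha
      have hmem : l a ∈ coannL (l '' X) := by rw [hY]; exact h3
      exact (lsup1 a u).2 (hmem (l u) ⟨u, hu, rfl⟩)

end Reticulation
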